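/- arXiv:1903.08632 — 2 statements merged into one kernel-verified Lean document; each statement's English description precedes it below -/
import Mathlib

section
/- Let G be a finite abelian group of order n acting by automorphisms on a commutative algebra V over the complex numbers. Then every element x of V can be written as a finite sum x = x₁ + ... + x_k where each x_i ∈ V satisfies x_i^n ∈ V₀, the subalgebra of elements fixed by every element of G. -/
/-!
Over ℂ, a finite abelian group `G` has `|G|` characters and they separate the points of `G`, so
every `x ∈ V` is the sum of its projections `x_ψ = |G|⁻¹ ∑_g ψ(g)⁻¹ (g • x)` onto the character
eigenspaces. Each `x_ψ` satisfies `g • x_ψ = ψ(g) x_ψ`, hence `g • x_ψ ^ |G| = ψ(g) ^ |G| x_ψ ^ |G|`,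
and `ψ(g) ^ |G| = ψ(g ^ |G|) = 1`.
-/

open Finset

theorem AddChar.apply_ofMul_pow_card_eq_one {G M : Type*} [Group G] [Fintype G] [Monoid M]
    (ψ : AddChar (Additive G) M) (g : G) : ψ (Additive.ofMul g) ^ Fintype.card G = 1 := by
  rw [← map_nsmul_eq_pow, ← ofMul_pow, pow_card_eq_one, ofMul_one, map_zero_eq_one]

theorem smul_pow_eq_of_smul_eq_smul {R G A : Type*} [CommSemiring R] [Semiring A] [Algebra R A]
    [Monoid G] [MulSemiringAction G A] {g : G} {y : A} {c : R} {m : ℕ}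
    (hy : g • y = c • y) (hc : c ^ m = 1) : g • y ^ m = y ^ m := by
  rw [smul_pow', hy, smul_pow, hc, one_smul]

section CharComponent

variable {G V : Type*} [CommGroup G] [Fintype G] [AddCommGroup V] [Module ℂ V]
  [DistribMulAction G V]

noncomputable def charComponent (ψ : AddChar (Additive G) ℂ) (x : V) : V :=
  (Fintype.card G : ℂ)⁻¹ • ∑ g : G, ψ (-Additive.ofMul g) • g • x

theorem smul_charComponent [SMulCommClass G ℂ V] (ψ : AddChar (Additive G) ℂ) (x : V) (h : G) :
    h • charComponent ψ x = ψ (Additive.ofMul h) • charComponent ψ x := by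
  have reindex : ∑ g : G, ψ (-Additive.ofMul g) • (h * g) • x
      = ∑ g : G, ψ (-Additive.ofMul (h⁻¹ * g)) • g • x :=
    Fintype.sum_equiv (Equiv.mulLeft h) _ _ fun g => by simp
  have shift (g : G) :
      ψ (-Additive.ofMul (h⁻¹ * g)) = ψ (Additive.ofMul h) * ψ (-Additive.ofMul g) := by
    rw [← AddChar.map_add_eq_mul, ofMul_mul, ofMul_inv]; congr 1; abel
  calc h • charComponent ψ x
      = (Fintype.card G : ℂ)⁻¹ • ∑ g : G, ψ (-Additive.ofMul g) • (h * g) • x := by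
        simp only [charComponent, smul_comm h, smul_sum, mul_smul]
    _ = (Fintype.card G : ℂ)⁻¹ •
          ∑ g : G, ψ (Additive.ofMul h) • ψ (-Additive.ofMul g) • g • x := by
        rw [reindex]; simp only [shift, mul_smul]
    _ = ψ (Additive.ofMul h) • charComponent ψ x := by
        rw [← smul_sum, charComponent, smul_comm]

theorem sum_charComponent (x : V) :
    ∑ ψ : AddChar (Additive G) ℂ, charComponent ψ x = x := by
  classical
  have orthogonality (g : G) : ∑ ψ : AddChar (Additive G) ℂ, ψ (-Additive.ofMul g) • g • x
      = if g = 1 then (Fintype.card G : ℂ) • x else 0 := by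
    rw [← sum_smul, AddChar.sum_apply_eq_ite]
    by_cases hg : g = 1 <;> simp [hg]
  simp only [charComponent, ← smul_sum]
  rw [sum_comm, Fintype.sum_congr _ _ orthogonality, sum_ite_eq' univ (1 : G)]
  simp

end CharComponent

theorem stmt_0 {G V : Type*} [CommGroup G] [Fintype G] [CommRing V] [Algebra ℂ V]
    [MulSemiringAction G V] [SMulCommClass G ℂ V] (x : V) :
    ∃ (k : ℕ) (f : Fin k → V), x = ∑ i, f i ∧
      ∀ i, ∀ g : G, g • ((f i) ^ (Fintype.card G)) = (f i) ^ (Fintype.card G) := by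
  let e := (Fintype.equivFin (AddChar (Additive G) ℂ)).symm
  refine ⟨_, fun i => charComponent (e i) x, ?_, fun i g => ?_⟩
  · rw [e.sum_comp (charComponent · x), sum_charComponent]
  · exact smul_pow_eq_of_smul_eq_smul (smul_charComponent _ x g)
      ((e i).apply_ofMul_pow_card_eq_one g)
end

section
/- Let F be a field, let K/F be a finite Galois extension, and let M ≤ Gal(K/F) be a subgroup such that the fixed field of M equals F. If M is solvable, then K is a solvable (radical) extension of F: every element of K lies in a radical tower over F. -/
/-!
Since the fixed field of `M` is `F`, Galois theory forces `M` to be the whole Galois group, which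
is therefore solvable. Over any proper intermediate field `L`, the group `Gal(K/L)` is solvable and
nontrivial, so it has a proper normal subgroup with cyclic quotient; its fixed field is a
nontrivial cyclic extension of `L` whose degree divides `[K:F]`, hence by Kummer theory it is
generated by an `n`-th root of an element of `L`. Adjoining such roots strictly enlarges `L`,
so after finitely many steps the tower reaches `K`.
-/

open IntermediateField Module

theorem CommGroup.exists_surjective_zmod_of_nontrivial (A : Type*) [CommGroup A] [Finite A]
    [Nontrivial A] : ∃ n, 1 < n ∧ ∃ f : A →* Multiplicative (ZMod n), Function.Surjective f := by
  obtain ⟨ι, _, n, hn, ⟨e⟩⟩ := CommGroup.equiv_prod_multiplicative_zmod_of_finite A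
  obtain ⟨i⟩ : Nonempty ι := by
    by_contra h
    rw [not_nonempty_iff] at h
    exact not_subsingleton A e.toEquiv.subsingleton
  exact ⟨n i, hn i, (Pi.evalMonoidHom _ i).comp e.toMonoidHom,
    (Function.surjective_eval i).comp e.surjective⟩

theorem Group.IsSolvable.exists_normal_ne_top_isCyclic_quotient (G : Type*) [Group G] [Finite G]
    [IsSolvable G] [Nontrivial G] :
    ∃ (N : Subgroup G) (_ : N.Normal), N ≠ ⊤ ∧ IsCyclic (G ⧸ N) := by
  have : Nontrivial (Abelianization G) :=
    QuotientGroup.nontrivial_iff.mpr (IsSolvable.commutator_lt_top_of_nontrivial G).ne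
  obtain ⟨n, hn, f, hf⟩ := CommGroup.exists_surjective_zmod_of_nontrivial (Abelianization G)
  have : Fact (1 < n) := ⟨hn⟩
  let φ := f.comp Abelianization.of
  let e := QuotientGroup.quotientKerEquivOfSurjective φ (hf.comp QuotientGroup.mk_surjective)
  exact ⟨φ.ker, inferInstance, QuotientGroup.nontrivial_iff.mp e.surjective.nontrivial,
    isCyclic_of_surjective _ e.symm.surjective⟩

section Kummer

variable {k K : Type*} [Field k] [Field K] [Algebra k K] [FiniteDimensional k K] [IsGalois k K]

theorem IsGalois.exists_pow_mem_range_notMem_range [Group.IsSolvable Gal(K/k)]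
    (hK : 1 < finrank k K) (hroots : ∀ n, n ∣ finrank k K → ∃ ζ : k, IsPrimitiveRoot ζ n) :
    ∃ (α : K) (n : ℕ), 0 < n ∧ α ^ n ∈ Set.range (algebraMap k K) ∧
      α ∉ Set.range (algebraMap k K) := by
  have : Nontrivial Gal(K/k) := by
    rwa [← Finite.one_lt_card_iff_nontrivial, IsGalois.card_aut_eq_finrank]
  obtain ⟨N, _, hN, _⟩ := Group.IsSolvable.exists_normal_ne_top_isCyclic_quotient Gal(K/k)
  have hE : fixedField N ≠ ⊥ := fun h ↦ hN <| by
    rw [← fixingSubgroup_fixedField N, h, fixingSubgroup_bot]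
  have : IsGalois k (fixedField N) := IsGalois.of_fixedField_normal_subgroup N
  have : IsCyclic Gal(fixedField N/k) :=
    isCyclic_of_surjective _ (IsGalois.normalAutEquivQuotient N).surjective
  obtain ⟨ζ, hζ⟩ := hroots _ (Dvd.intro _ (finrank_mul_finrank k (fixedField N) K))
  obtain ⟨α, ⟨c, hc⟩, hα⟩ := exists_root_adjoin_eq_top_of_isCyclic k (fixedField N)
    ⟨ζ, (mem_primitiveRoots finrank_pos).mpr hζ⟩
  refine ⟨α, finrank k (fixedField N), finrank_pos, ⟨c, congrArg Subtype.val hc⟩, ?_⟩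
  rintro ⟨c', hc'⟩
  apply hE
  rw [← IntermediateField.finrank_eq_one_iff, ← bot_eq_top_iff_finrank_eq_one, ← hα, eq_comm,
    adjoin_simple_eq_bot_iff]
  exact ⟨c', Subtype.ext hc'⟩

end Kummer

namespace IntermediateField

variable {F K : Type*} [Field F] [Field K] [Algebra F K]

theorem exists_pow_mem_notMem_of_ne_top [FiniteDimensional F K] [IsGalois F K]
    [Group.IsSolvable Gal(K/F)]
    (hroots : ∀ n : ℕ, 0 < n → n ∣ finrank F K → ∃ ζ : F, IsPrimitiveRoot ζ n)
    {L : IntermediateField F K} (hL : L ≠ ⊤) :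
    ∃ (α : K) (n : ℕ), 0 < n ∧ α ^ n ∈ L ∧ α ∉ L := by
  have : Group.IsSolvable Gal(K/L) :=
    Group.isSolvable_of_surjective (f := (fixingSubgroupEquiv L).toMonoidHom)
      (fixingSubgroupEquiv L).surjective
  have hK : 1 < finrank L K :=
    lt_of_le_of_ne finrank_pos (Ne.symm (mt finrank_eq_one_iff_eq_top.mp hL))
  obtain ⟨α, n, hn, ⟨c, hc⟩, hα⟩ := IsGalois.exists_pow_mem_range_notMem_range hK fun n hdvd ↦ by
    obtain ⟨ζ, hζ⟩ := hroots n (Nat.pos_of_dvd_of_pos hdvd finrank_pos)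
      (hdvd.trans (Dvd.intro_left _ (finrank_mul_finrank F L K)))
    exact ⟨algebraMap F L ζ, hζ.map_of_injective (algebraMap F L).injective⟩
  exact ⟨α, n, hn, hc ▸ c.2, fun h ↦ hα ⟨⟨α, h⟩, rfl⟩⟩

instance wellFoundedGT [FiniteDimensional F K] : WellFoundedGT (IntermediateField F K) :=
  StrictMono.wellFoundedGT
    (f := fun L : IntermediateField F K ↦ Subalgebra.toSubmodule L.toSubalgebra) fun _ _ h ↦ h

variable (F) in
def HasRadicalTower (L : IntermediateField F K) : Prop :=
  ∃ (r : ℕ) (Fs : Fin (r + 1) → IntermediateField F K),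
    Fs 0 = ⊥ ∧ Fs (Fin.last r) = L ∧
    ∀ j : Fin r, ∃ (α : K) (n : ℕ), 0 < n ∧ α ^ n ∈ Fs j.castSucc ∧
      Fs j.succ = Fs j.castSucc ⊔ adjoin F {α}

theorem hasRadicalTower_bot : HasRadicalTower F (⊥ : IntermediateField F K) :=
  ⟨0, fun _ ↦ ⊥, rfl, rfl, fun j ↦ j.elim0⟩

theorem HasRadicalTower.sup_adjoin {L : IntermediateField F K} (hL : HasRadicalTower F L)
    {α : K} {n : ℕ} (hn : 0 < n) (hα : α ^ n ∈ L) : HasRadicalTower F (L ⊔ adjoin F {α}) := by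
  obtain ⟨r, Fs, h0, hlast, hstep⟩ := hL
  refine ⟨r + 1, Fin.snoc Fs (L ⊔ adjoin F {α}), ?_, Fin.snoc_last .., Fin.lastCases ?_ fun j ↦ ?_⟩
  · exact (Fin.snoc_castSucc (i := 0) ..).trans h0
  · refine ⟨α, n, hn, ?_, ?_⟩
    · rwa [Fin.snoc_castSucc, hlast]
    · rw [Fin.succ_last, Fin.snoc_last, Fin.snoc_castSucc, hlast]
  · simpa only [Fin.succ_castSucc, Fin.snoc_castSucc] using hstep j

theorem hasRadicalTower_top [FiniteDimensional F K]
    (hstep : ∀ L : IntermediateField F K, L ≠ ⊤ → ∃ (α : K) (n : ℕ), 0 < n ∧ α ^ n ∈ L ∧ α ∉ L) :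
    HasRadicalTower F (⊤ : IntermediateField F K) := by
  suffices ∀ L : IntermediateField F K, HasRadicalTower F L → HasRadicalTower F ⊤ from
    this ⊥ hasRadicalTower_bot
  intro L
  induction L using WellFoundedGT.induction with
  | _ L ih =>
    intro hL
    by_cases hLtop : L = ⊤
    · exact hLtop ▸ hL
    obtain ⟨α, n, hn, hαn, hα⟩ := hstep L hLtop
    refine ih _ (lt_of_le_of_ne le_sup_left fun h ↦ hα ?_) (hL.sup_adjoin hn hαn)
    exact h ▸ (le_sup_right : adjoin F {α} ≤ _) (mem_adjoin_simple_self F α)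

end IntermediateField

theorem stmt_5_general {F K : Type*} [Field F] [Field K] [Algebra F K]
    [FiniteDimensional F K] [IsGalois F K]
    (hroots : ∀ n : ℕ, 0 < n → n ∣ Module.finrank F K → ∃ ζ : F, IsPrimitiveRoot ζ n)
    (M : Subgroup (K ≃ₐ[F] K)) (hfix : IntermediateField.fixedField M = ⊥)
    (hM : IsSolvable M) :
    ∀ x : K, ∃ (r : ℕ) (Fs : Fin (r + 1) → IntermediateField F K),
      Fs 0 = ⊥ ∧ x ∈ Fs (Fin.last r) ∧
      ∀ j : Fin r, ∃ (α : K) (nj : ℕ), 0 < nj ∧ (α ^ nj) ∈ Fs j.castSucc ∧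
        Fs j.succ = Fs j.castSucc ⊔ IntermediateField.adjoin F {α} := by
  have hM_top : M = ⊤ := by
    rw [← fixingSubgroup_fixedField M, hfix, fixingSubgroup_bot]
  have : Group.IsSolvable M := hM
  have : Group.IsSolvable Gal(K/F) :=
    Group.isSolvable_of_surjective (f := M.subtype) fun g ↦ ⟨⟨g, hM_top ▸ Subgroup.mem_top g⟩, rfl⟩
  obtain ⟨r, Fs, h0, hlast, hstep⟩ :=
    hasRadicalTower_top fun L hL ↦ exists_pow_mem_notMem_of_ne_top hroots hL
  exact fun x ↦ ⟨r, Fs, h0, hlast ▸ mem_top, hstep⟩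

theorem stmt_5 {F K : Type*} [Field F] [Field K] [CharZero F] [Algebra F K]
    [FiniteDimensional F K] [IsGalois F K]
    (hroots : ∀ n : ℕ, 0 < n → n ∣ Module.finrank F K → ∃ ζ : F, IsPrimitiveRoot ζ n)
    (M : Subgroup (K ≃ₐ[F] K)) (hfix : IntermediateField.fixedField M = ⊥)
    (hM : IsSolvable M) :
    ∀ x : K, ∃ (r : ℕ) (Fs : Fin (r + 1) → IntermediateField F K),
      Fs 0 = ⊥ ∧ x ∈ Fs (Fin.last r) ∧
      ∀ j : Fin r, ∃ (α : K) (nj : ℕ), 0 < nj ∧ (α ^ nj) ∈ Fs j.castSucc ∧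
        Fs j.succ = Fs j.castSucc ⊔ IntermediateField.adjoin F {α} :=
  stmt_5_general hroots M hfix hM
end
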